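/- arXiv:0811.3145 — 7 statements merged into one kernel-verified Lean document; each statement's English description precedes it below -/
import Mathlib

section
/- Let n ≥ 2, let x_1,…,x_n ≥ 0 with at least one x_i > 0, and let α_1,…,α_n > 0 satisfy ∑_{i=1}^n α_i = 1. Then exp(2·(1 − (∑_{i=1}^n α_i x_i^{1/2}) / (∑_{i=1}^n α_i x_i)^{1/2})) · ∏_{i=1}^n x_i^{α_i} ≤ ∑_{i=1}^n α_i x_i. -/
open Finset

theorem refined_am_gm (n : ℕ) (hn : 2 ≤ n) (x α : Fin n → ℝ)
    (hx : ∀ i, 0 ≤ x i) (hx' : ∃ i, 0 < x i)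
    (hα : ∀ i, 0 < α i) (hsum : ∑ i, α i = 1) :
    Real.exp (2 * (1 - (∑ i, α i * x i ^ ((1 : ℝ)/2)) /
        (∑ i, α i * x i) ^ ((1 : ℝ)/2))) * ∏ i, x i ^ (α i)
      ≤ ∑ i, α i * x i := by
  obtain ⟨j, hj⟩ := hx'
  have hA : 0 < ∑ i, α i * x i := by
    refine Finset.sum_pos' (fun i _ => mul_nonneg (hα i).le (hx i)) ⟨j, Finset.mem_univ j, ?_⟩
    exact mul_pos (hα j) hj
  by_cases h0 : ∀ i, 0 < x i
  · set A := ∑ i, α i * x i with hAdef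
    have key : ∀ u : ℝ, 0 < u → Real.log u + 2 - 2 * u ^ ((1:ℝ)/2) ≤ 0 := by
      intro u hu
      have h1 : Real.log (u ^ ((1:ℝ)/2)) ≤ u ^ ((1:ℝ)/2) - 1 :=
        Real.log_le_sub_one_of_pos (Real.rpow_pos_of_pos hu _)
      rw [Real.log_rpow hu] at h1
      linarith
    have hprod : ∏ i, x i ^ α i = Real.exp (∑ i, α i * Real.log (x i)) := by
      rw [Real.exp_sum]
      refine Finset.prod_congr rfl fun i _ => ?_
      rw [Real.rpow_def_of_pos (h0 i), mul_comm]
    rw [hprod, ← Real.exp_add]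
    conv_rhs => rw [← Real.exp_log hA]
    rw [Real.exp_le_exp]
    have hdiv : (∑ i, α i * x i ^ ((1:ℝ)/2)) / A ^ ((1:ℝ)/2)
        = ∑ i, α i * (x i / A) ^ ((1:ℝ)/2) := by
      rw [Finset.sum_div]
      refine Finset.sum_congr rfl fun i _ => ?_
      rw [Real.div_rpow (hx i) hA.le, mul_div_assoc]
    have hsum' : ∑ i, α i * (Real.log (x i) - Real.log A + 2 - 2 * (x i / A) ^ ((1:ℝ)/2)) ≤ 0 := by
      refine Finset.sum_nonpos fun i _ => mul_nonpos_of_nonneg_of_nonpos (hα i).le ?_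
      have hk := key (x i / A) (div_pos (h0 i) hA)
      rw [Real.log_div (h0 i).ne' hA.ne'] at hk
      linarith
    have expand : ∑ i, α i * (Real.log (x i) - Real.log A + 2 - 2 * (x i / A) ^ ((1:ℝ)/2))
        = (∑ i, α i * Real.log (x i)) - Real.log A + 2
          - 2 * ∑ i, α i * (x i / A) ^ ((1:ℝ)/2) := by
      have h : ∀ i, α i * (Real.log (x i) - Real.log A + 2 - 2 * (x i / A) ^ ((1:ℝ)/2))
          = α i * Real.log (x i) - α i * Real.log A + α i * 2
            - 2 * (α i * (x i / A) ^ ((1:ℝ)/2)) := fun i => by ring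
      simp only [h, Finset.sum_sub_distrib, Finset.sum_add_distrib, ← Finset.mul_sum,
        ← Finset.sum_mul, hsum, one_mul]
    rw [hdiv]
    linarith [hsum', expand.le, expand.ge]
  · push_neg at h0
    obtain ⟨i, hi⟩ := h0
    have hxi : x i = 0 := le_antisymm hi (hx i)
    have : ∏ k, x k ^ α k = 0 :=
      Finset.prod_eq_zero (Finset.mem_univ i)
        (by rw [hxi]; exact Real.zero_rpow (hα i).ne')
    rw [this, mul_zero]
    exact hA.le
end

section
/- Let (X, μ) be a probability space, let 0 < r < s/2 < ∞, and let f ≥ 0 belong to L^s(μ) with ‖f‖_s > 0. Then ‖f‖_r ≤ ‖f‖_s · [1 − (2r/s)·(1 − ‖f^{s/2}‖_1 / ‖f^{s/2}‖_2)]^{1/r}. -/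
open MeasureTheory

theorem refined_holder_probability {X : Type*} [MeasurableSpace X]
    (μ : Measure X) [IsProbabilityMeasure μ]
    (r s : ℝ) (hr : 0 < r) (hrs : r < s / 2)
    (f : X → ℝ) (hf : ∀ x, 0 ≤ f x)
    (hfs : MemLp f (ENNReal.ofReal s) μ)
    (hpos : 0 < (∫ x, f x ^ s ∂μ) ^ (1/s)) :
    (∫ x, f x ^ r ∂μ) ^ (1/r)
      ≤ (∫ x, f x ^ s ∂μ) ^ (1/s) *
        (1 - (2 * r / s) *
          (1 - (∫ x, f x ^ (s/2) ∂μ) /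
            (∫ x, (f x ^ (s/2)) ^ 2 ∂μ) ^ ((1 : ℝ)/2))) ^ (1/r) := by
  have hs : 0 < s := by linarith
  set α : ℝ := 2 * r / s with hα_def
  have hα0 : 0 < α := by positivity
  have hα1 : α < 1 := by rw [hα_def, div_lt_one hs]; linarith
  set Is : ℝ := ∫ x, f x ^ s ∂μ with hIs_def
  set Ih : ℝ := ∫ x, f x ^ (s/2) ∂μ with hIh_def
  set Ir : ℝ := ∫ x, f x ^ r ∂μ with hIr_def
  set N : ℝ := Is ^ (1/s) with hN_def
  have hN : 0 < N := hpos
  have hIs_nonneg : 0 ≤ Is := integral_nonneg fun x => Real.rpow_nonneg (hf x) _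
  have hIs : 0 < Is := by
    rcases lt_or_eq_of_le hIs_nonneg with h | h
    · exact h
    · exfalso
      rw [hN_def, ← h, Real.zero_rpow (by positivity : (1:ℝ)/s ≠ 0)] at hN
      exact lt_irrefl 0 hN
  have hIh_nonneg : 0 ≤ Ih := integral_nonneg fun x => Real.rpow_nonneg (hf x) _
  have hIr_nonneg : 0 ≤ Ir := integral_nonneg fun x => Real.rpow_nonneg (hf x) _
  -- integrability
  have hmem : ∀ t : ℝ, 0 < t → t ≤ s → Integrable (fun x => f x ^ t) μ := by
    intro t ht hts
    have hm : MemLp f (ENNReal.ofReal t) μ :=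
      hfs.mono_exponent (ENNReal.ofReal_le_ofReal hts)
    have h2 := hm.integrable_norm_rpow (by simp [ENNReal.ofReal_eq_zero, not_le, ht])
      ENNReal.ofReal_ne_top
    rw [ENNReal.toReal_ofReal ht.le] at h2
    refine h2.congr (Filter.Eventually.of_forall fun x => ?_)
    show ‖f x‖ ^ t = f x ^ t
    rw [Real.norm_eq_abs, abs_of_nonneg (hf x)]
  have h_r : Integrable (fun x => f x ^ r) μ := hmem r hr (by linarith)
  have h_h : Integrable (fun x => f x ^ (s/2)) μ := hmem (s/2) (by linarith) (by linarith)
  -- rewrite the squared integral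
  have hsq : (∫ x, (f x ^ (s/2)) ^ 2 ∂μ) = Is := by
    rw [hIs_def]
    refine integral_congr_ae (Filter.Eventually.of_forall fun x => ?_)
    show (f x ^ (s/2)) ^ (2:ℕ) = f x ^ s
    rw [← Real.rpow_natCast (f x ^ (s/2)) 2, ← Real.rpow_mul (hf x)]
    norm_num
  have hNs2 : N ^ (s/2) = Is ^ ((1:ℝ)/2) := by
    rw [hN_def, ← Real.rpow_mul hIs_nonneg]
    congr 1
    field_simp
  -- key integral estimate
  have hexp : s / 2 * α = r := by
    rw [hα_def]; field_simp
  have key : Ir / N ^ r ≤ (1 - α) + α * (Ih / N ^ (s/2)) := by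
    have hint2 : Integrable (fun x => (1 - α) + α * (f x ^ (s/2) / N ^ (s/2))) μ :=
      (integrable_const _).add ((h_h.div_const _).const_mul _)
    have hpt : ∀ x, f x ^ r / N ^ r ≤ (1 - α) + α * (f x ^ (s/2) / N ^ (s/2)) := by
      intro x
      have hq : (0:ℝ) ≤ f x / N := div_nonneg (hf x) hN.le
      have hu : 0 ≤ (f x / N) ^ (s/2) := Real.rpow_nonneg hq _
      have hgm := Real.geom_mean_le_arith_mean2_weighted (by linarith : (0:ℝ) ≤ 1 - α)
        hα0.le zero_le_one hu (by ring)
      calc f x ^ r / N ^ r = (f x / N) ^ r := (Real.div_rpow (hf x) hN.le r).symm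
        _ = (1:ℝ) ^ (1 - α) * ((f x / N) ^ (s/2)) ^ α := by
            rw [Real.one_rpow, one_mul, ← Real.rpow_mul hq, hexp]
        _ ≤ (1 - α) * 1 + α * (f x / N) ^ (s/2) := hgm
        _ = (1 - α) + α * (f x ^ (s/2) / N ^ (s/2)) := by
            rw [Real.div_rpow (hf x) hN.le]; ring
    have hmono := integral_mono (h_r.div_const _) hint2 hpt
    rw [integral_add (integrable_const _) ((h_h.div_const _).const_mul _),
      integral_div, integral_const_mul, integral_div] at hmono
    simpa [mul_div_assoc] using hmono
  -- conclude
  have hB : 0 ≤ (1 - α) + α * (Ih / N ^ (s/2)) := by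
    have h1 : 0 ≤ α * (Ih / N ^ (s/2)) :=
      mul_nonneg hα0.le (div_nonneg hIh_nonneg (Real.rpow_nonneg hN.le _))
    linarith
  have hmain : Ir ≤ ((1 - α) + α * (Ih / N ^ (s/2))) * N ^ r :=
    (div_le_iff₀ (Real.rpow_pos_of_pos hN r)).mp key
  have hfinal := Real.rpow_le_rpow hIr_nonneg hmain (by positivity : (0:ℝ) ≤ 1/r)
  rw [Real.mul_rpow hB (Real.rpow_nonneg hN.le _), ← Real.rpow_mul hN.le,
    mul_one_div, div_self hr.ne', Real.rpow_one] at hfinal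
  have heq : 1 - α * (1 - Ih / (∫ x, (f x ^ (s/2)) ^ 2 ∂μ) ^ ((1:ℝ)/2))
      = (1 - α) + α * (Ih / N ^ (s/2)) := by
    rw [hsq, ← hNs2]; ring
  rw [heq]
  calc Ir ^ (1/r) ≤ ((1 - α) + α * (Ih / N ^ (s/2))) ^ (1/r) * N := hfinal
    _ = N * ((1 - α) + α * (Ih / N ^ (s/2))) ^ (1/r) := mul_comm _ _
end

section
/- Let n ≥ 2, let x_1,…,x_n ≥ 0 with at least one x_i > 0, let α_1,…,α_n > 0 satisfy ∑_{i=1}^n α_i = 1, and let 0 < r < 1/2. Set c = 1 − (∑_{i=1}^n α_i x_i^{1/2}) / (∑_{i=1}^n α_i x_i)^{1/2}. Then (∑_{i=1}^n α_i x_i^r)^{1/r} ≤ (∑_{i=1}^n α_i x_i) · (1 − 2rc)^{1/r}. -/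
open Finset

theorem refined_power_mean (n : ℕ) (hn : 2 ≤ n) (x α : Fin n → ℝ)
    (hx : ∀ i, 0 ≤ x i) (hx' : ∃ i, 0 < x i)
    (hα : ∀ i, 0 < α i) (hsum : ∑ i, α i = 1)
    (r : ℝ) (hr : 0 < r) (hr' : r < 1/2)
    (c : ℝ)
    (hc : c = 1 - (∑ i, α i * x i ^ ((1 : ℝ)/2)) / (∑ i, α i * x i) ^ ((1 : ℝ)/2)) :
    (∑ i, α i * x i ^ r) ^ (1/r) ≤ (∑ i, α i * x i) * (1 - 2 * r * c) ^ (1/r) := by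
  set S : ℝ := ∑ i, α i * x i with hSdef
  obtain ⟨j, hj⟩ := hx'
  have hS : 0 < S := by
    apply Finset.sum_pos' (fun i _ => mul_nonneg (hα i).le (hx i))
    exact ⟨j, Finset.mem_univ j, mul_pos (hα j) hj⟩
  have hShalf : 0 < S ^ ((1:ℝ)/2) := Real.rpow_pos_of_pos hS _
  -- pointwise Bernoulli: (x i / S)^r ≤ 1 - 2r + 2r * (x i / S)^(1/2)
  have key : ∀ i, (x i / S) ^ r ≤ 1 - 2*r + 2*r * (x i / S) ^ ((1:ℝ)/2) := by
    intro i
    have hy : 0 ≤ x i / S := div_nonneg (hx i) hS.le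
    set u : ℝ := (x i / S) ^ ((1:ℝ)/2) with hu
    have hu0 : 0 ≤ u := Real.rpow_nonneg hy _
    have h1 : (x i / S) ^ r = u ^ (2*r) := by
      rw [hu, ← Real.rpow_mul hy]
      congr 1
      ring
    have h2 : (1 + (u - 1)) ^ (2*r) ≤ 1 + (2*r) * (u - 1) :=
      rpow_one_add_le_one_add_mul_self (by linarith) (by linarith) (by linarith)
    rw [h1]
    have : (1 + (u - 1)) = u := by ring
    rw [this] at h2
    linarith
  -- sum up
  have hij : ∀ i, x i = (x i / S) * S := fun i => (div_mul_cancel₀ _ hS.ne').symm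
  have hsum_le : ∑ i, α i * (x i / S) ^ r ≤ 1 - 2 * r * c := by
    have hcle : 1 - 2 * r * c =
        ∑ i, α i * (1 - 2*r + 2*r * (x i / S) ^ ((1:ℝ)/2)) := by
      have hdiv : ∀ i, (x i / S) ^ ((1:ℝ)/2) = x i ^ ((1:ℝ)/2) / S ^ ((1:ℝ)/2) :=
        fun i => Real.div_rpow (hx i) hS.le _
      simp only [hdiv, hc]
      rw [Finset.sum_congr rfl (fun i _ => by ring_nf :
        ∀ i ∈ Finset.univ, α i * (1 - 2*r + 2*r * (x i ^ ((1:ℝ)/2) / S ^ ((1:ℝ)/2)))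
          = α i * (1 - 2*r) + 2*r * (α i * x i ^ ((1:ℝ)/2)) / S ^ ((1:ℝ)/2))]
      rw [Finset.sum_add_distrib, ← Finset.sum_mul, hsum, ← Finset.sum_div,
        ← Finset.mul_sum]
      field_simp
      ring
    rw [hcle]
    exact Finset.sum_le_sum fun i _ => mul_le_mul_of_nonneg_left (key i) (hα i).le
  have ht : 0 < 1 - 2 * r * c := by
    have hc1 : c ≤ 1 := by
      rw [hc]
      have : 0 ≤ (∑ i, α i * x i ^ ((1:ℝ)/2)) / S ^ ((1:ℝ)/2) := by
        apply div_nonneg _ hShalf.le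
        exact Finset.sum_nonneg fun i _ => mul_nonneg (hα i).le (Real.rpow_nonneg (hx i) _)
      linarith
    nlinarith
  -- main bound: ∑ α x^r ≤ S^r * (1 - 2rc)
  have hmain : ∑ i, α i * x i ^ r ≤ S ^ r * (1 - 2 * r * c) := by
    have : ∑ i, α i * x i ^ r = S ^ r * ∑ i, α i * (x i / S) ^ r := by
      rw [Finset.mul_sum]
      refine Finset.sum_congr rfl fun i _ => ?_
      rw [Real.div_rpow (hx i) hS.le]
      have hSr : (0:ℝ) < S ^ r := Real.rpow_pos_of_pos hS r
      field_simp
    rw [this]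
    have hSr : 0 ≤ S ^ r := (Real.rpow_pos_of_pos hS r).le
    exact mul_le_mul_of_nonneg_left hsum_le hSr
  -- conclude by raising to 1/r
  have hLnn : 0 ≤ ∑ i, α i * x i ^ r :=
    Finset.sum_nonneg fun i _ => mul_nonneg (hα i).le (Real.rpow_nonneg (hx i) _)
  calc (∑ i, α i * x i ^ r) ^ (1/r)
      ≤ (S ^ r * (1 - 2 * r * c)) ^ (1/r) :=
        Real.rpow_le_rpow hLnn hmain (by positivity)
    _ = S * (1 - 2 * r * c) ^ (1/r) := by
        rw [Real.mul_rpow (Real.rpow_pos_of_pos hS r).le ht.le,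
          ← Real.rpow_mul hS.le]
        rw [mul_one_div, div_self hr.ne', Real.rpow_one]
end

section
/- Let n ≥ 2, let x_1,…,x_n ≥ 0 with at least one x_i > 0, and let α_1,…,α_n > 0 satisfy ∑_{i=1}^n α_i = 1. Let V = ∑_{i=1}^n α_i · (x_i^{1/2}/S)² − (∑_{i=1}^n α_i · x_i^{1/2}/S)², where S = (∑_{i=1}^n α_i x_i)^{1/2}, denote the variance of the normalized vector (x_i^{1/2}/S) with respect to the weights α_i. Then exp(V) · ∏_{i=1}^n x_i^{α_i} ≤ ∑_{i=1}^n α_i x_i. -/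
open Finset

theorem variance_am_gm (n : ℕ) (hn : 2 ≤ n) (x α : Fin n → ℝ)
    (hx : ∀ i, 0 ≤ x i) (hx' : ∃ i, 0 < x i)
    (hα : ∀ i, 0 < α i) (hsum : ∑ i, α i = 1)
    (S V : ℝ)
    (hS : S = (∑ i, α i * x i) ^ ((1 : ℝ)/2))
    (hV : V = ∑ i, α i * (x i ^ ((1 : ℝ)/2) / S) ^ 2 -
        (∑ i, α i * (x i ^ ((1 : ℝ)/2) / S)) ^ 2) :
    Real.exp V * ∏ i, x i ^ (α i) ≤ ∑ i, α i * x i := by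
  obtain ⟨j, hj⟩ := hx'
  set A : ℝ := ∑ i, α i * x i with hA
  have hApos : 0 < A := by
    apply Finset.sum_pos' (fun i _ => mul_nonneg (hα i).le (hx i))
    exact ⟨j, Finset.mem_univ j, mul_pos (hα j) hj⟩
  have hSpos : 0 < S := by rw [hS]; positivity
  have hS2 : S ^ 2 = A := by
    rw [hS, ← Real.rpow_natCast (A ^ ((1:ℝ)/2)) 2, ← Real.rpow_mul hApos.le]
    norm_num
  set T : ℝ := ∑ i, α i * x i ^ ((1:ℝ)/2) with hT
  have hTpos : 0 < T := by
    apply Finset.sum_pos' (fun i _ => mul_nonneg (hα i).le (Real.rpow_nonneg (hx i) _))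
    exact ⟨j, Finset.mem_univ j, mul_pos (hα j) (Real.rpow_pos_of_pos hj _)⟩
  have hsq : ∀ i, (x i ^ ((1:ℝ)/2)) ^ 2 = x i := by
    intro i
    rw [← Real.rpow_natCast (x i ^ ((1:ℝ)/2)) 2, ← Real.rpow_mul (hx i)]
    norm_num
  have hfirst : ∑ i, α i * (x i ^ ((1 : ℝ)/2) / S) ^ 2 = 1 := by
    have h1 : ∀ i, α i * (x i ^ ((1 : ℝ)/2) / S) ^ 2 = α i * x i / A := by
      intro i
      rw [div_pow, hsq i, hS2]
      ring
    simp only [h1]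
    rw [← Finset.sum_div, div_self hApos.ne']
  have hsecond : ∑ i, α i * (x i ^ ((1 : ℝ)/2) / S) = T / S := by
    rw [hT, Finset.sum_div]
    exact Finset.sum_congr rfl fun i _ => by ring
  set t : ℝ := (T / S) ^ 2 with ht
  have htpos : 0 < t := by positivity
  have hVt : V = 1 - t := by rw [hV, hfirst, hsecond]
  have hexp : Real.exp V ≤ 1 / t := by
    rw [hVt]
    have hlog : Real.log t ≤ t - 1 := Real.log_le_sub_one_of_pos htpos
    have h2 : Real.exp (1 - t) ≤ Real.exp (- Real.log t) := by
      apply Real.exp_le_exp.mpr; linarith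
    rwa [Real.exp_neg, Real.exp_log htpos, ← one_div] at h2
  have hGnonneg : 0 ≤ ∏ i, x i ^ (α i) :=
    Finset.prod_nonneg fun i _ => Real.rpow_nonneg (hx i) _
  have hamgm : (∏ i, x i ^ (α i)) ^ ((1:ℝ)/2) ≤ T := by
    have h := Real.geom_mean_le_arith_mean_weighted Finset.univ α
      (fun i => x i ^ ((1:ℝ)/2)) (fun i _ => (hα i).le) hsum
      (fun i _ => Real.rpow_nonneg (hx i) _)
    calc (∏ i, x i ^ (α i)) ^ ((1:ℝ)/2)
        = ∏ i, (x i ^ ((1:ℝ)/2)) ^ (α i) := by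
          rw [← Real.finset_prod_rpow _ _ (fun i _ => Real.rpow_nonneg (hx i) _)]
          exact Finset.prod_congr rfl fun i _ => by
            rw [← Real.rpow_mul (hx i), ← Real.rpow_mul (hx i), mul_comm]
      _ ≤ T := h
  have hG : ∏ i, x i ^ (α i) ≤ T ^ 2 := by
    have h3 := mul_le_mul hamgm hamgm (Real.rpow_nonneg hGnonneg _) hTpos.le
    rwa [← Real.rpow_add' hGnonneg (by norm_num), show (1:ℝ)/2 + 1/2 = 1 by norm_num,
      Real.rpow_one, ← sq] at h3
  calc Real.exp V * ∏ i, x i ^ (α i)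
      ≤ (1 / t) * T ^ 2 := by
        exact mul_le_mul hexp hG hGnonneg (by positivity)
    _ = A := by
        rw [ht, div_pow]
        field_simp
        rw [hS2]
end

section
/- Let n ≥ 2 and let y = (y_1,…,y_n) ∈ ℝ^n be a nonzero vector. Then (∏_{i=1}^n |y_i|^{1/n}) / ((1/n)·∑_{i=1}^n y_i²)^{1/2} ≤ exp( ((1/n)·∑_{i=1}^n |y_i|) / ((1/n)·∑_{i=1}^n y_i²)^{1/2} − 1 ). -/
open Finset

theorem refined_am_gm_gm_am_ratio (n : ℕ) (hn : 2 ≤ n) (y : Fin n → ℝ) (hy : y ≠ 0) :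
    (∏ i, |y i| ^ ((1 : ℝ)/n)) / (((1 : ℝ)/n) * ∑ i, (y i) ^ 2) ^ ((1 : ℝ)/2)
      ≤ Real.exp ((((1 : ℝ)/n) * ∑ i, |y i|) /
          (((1 : ℝ)/n) * ∑ i, (y i) ^ 2) ^ ((1 : ℝ)/2) - 1) := by
  have hn0 : (0:ℝ) < n := by positivity
  obtain ⟨j, hj⟩ : ∃ j, y j ≠ 0 := by
    by_contra h; push_neg at h; exact hy (funext h)
  have hsum : (0:ℝ) < ∑ i, (y i) ^ 2 := by
    apply Finset.sum_pos' (fun i _ => sq_nonneg _)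
    exact ⟨j, Finset.mem_univ j, by positivity⟩
  have hQ : (0:ℝ) < (((1 : ℝ)/n) * ∑ i, (y i) ^ 2) ^ ((1 : ℝ)/2) := by positivity
  set Q := (((1 : ℝ)/n) * ∑ i, (y i) ^ 2) ^ ((1 : ℝ)/2)
  have hGA : (∏ i, |y i| ^ ((1 : ℝ)/n)) ≤ ((1 : ℝ)/n) * ∑ i, |y i| := by
    have := Real.geom_mean_le_arith_mean_weighted Finset.univ
      (fun _ => (1:ℝ)/n) (fun i => |y i|)
      (fun i _ => by positivity)
      (by simp [Finset.card_univ]; field_simp)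
      (fun i _ => abs_nonneg _)
    simpa [Finset.mul_sum] using this
  calc (∏ i, |y i| ^ ((1 : ℝ)/n)) / Q
      ≤ (((1 : ℝ)/n) * ∑ i, |y i|) / Q := by
        gcongr
    _ ≤ Real.exp ((((1 : ℝ)/n) * ∑ i, |y i|) / Q - 1) := by
        have := Real.add_one_le_exp ((((1 : ℝ)/n) * ∑ i, |y i|) / Q - 1)
        linarith
end

section
/- Let n ≥ 2 and let y = (y_1,…,y_n) ∈ ℝ^n satisfy ‖y‖_2 = 1, where ‖y‖_2 = (∑_{i=1}^n y_i²)^{1/2}. Then √n · ∏_{i=1}^n |y_i|^{1/n} ≤ exp( n^{−1/2}·‖y‖_1 − 1 ), where ‖y‖_1 = ∑_{i=1}^n |y_i|. -/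
open Finset

theorem refined_am_gm_on_sphere (n : ℕ) (hn : 2 ≤ n) (y : Fin n → ℝ)
    (hy : (∑ i, (y i) ^ 2) ^ ((1 : ℝ)/2) = 1) :
    Real.sqrt n * ∏ i, |y i| ^ ((1 : ℝ)/n)
      ≤ Real.exp ((n : ℝ) ^ (-(1 : ℝ)/2) * ∑ i, |y i| - 1) := by
  have hn0 : (0:ℝ) < n := by exact_mod_cast Nat.lt_of_lt_of_le Nat.zero_lt_two hn
  have hs : (0:ℝ) ≤ Real.sqrt n := Real.sqrt_nonneg _
  have hne : (n:ℝ) ≠ 0 := ne_of_gt hn0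
  have step1 : Real.sqrt n * ∏ i, |y i| ^ ((1 : ℝ)/n)
      = ∏ i, (Real.sqrt n * |y i|) ^ ((1 : ℝ)/n) := by
    simp_rw [Real.mul_rpow hs (abs_nonneg _)]
    rw [Finset.prod_mul_distrib, Finset.prod_const, Finset.card_univ, Fintype.card_fin,
      ← Real.rpow_natCast (Real.sqrt n ^ ((1:ℝ)/n)) n, ← Real.rpow_mul hs,
      one_div_mul_cancel hne, Real.rpow_one]
  have step2 : ∀ i : Fin n, (Real.sqrt n * |y i|) ^ ((1 : ℝ)/n)
      ≤ Real.exp ((Real.sqrt n * |y i| - 1) * ((1:ℝ)/n)) := by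
    intro i
    have ht : Real.sqrt n * |y i| ≤ Real.exp (Real.sqrt n * |y i| - 1) := by
      have := Real.add_one_le_exp (Real.sqrt n * |y i| - 1)
      linarith
    calc (Real.sqrt n * |y i|) ^ ((1 : ℝ)/n)
        ≤ (Real.exp (Real.sqrt n * |y i| - 1)) ^ ((1:ℝ)/n) :=
          Real.rpow_le_rpow (mul_nonneg hs (abs_nonneg _)) ht (by positivity)
      _ = Real.exp ((Real.sqrt n * |y i| - 1) * ((1:ℝ)/n)) := (Real.exp_mul _ _).symm
  rw [step1]
  calc ∏ i, (Real.sqrt n * |y i|) ^ ((1 : ℝ)/n)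
      ≤ ∏ i, Real.exp ((Real.sqrt n * |y i| - 1) * ((1:ℝ)/n)) :=
        Finset.prod_le_prod (fun i _ => by positivity) (fun i _ => step2 i)
    _ = Real.exp (∑ i, (Real.sqrt n * |y i| - 1) * ((1:ℝ)/n)) := (Real.exp_sum _ _).symm
    _ ≤ Real.exp ((n : ℝ) ^ (-(1 : ℝ)/2) * ∑ i, |y i| - 1) := by
        apply Real.exp_le_exp.mpr
        have hpow : (n : ℝ) ^ (-(1 : ℝ)/2) = Real.sqrt n / n := by
          rw [Real.sqrt_eq_rpow, eq_div_iff hne]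
          nth_rewrite 2 [← Real.rpow_one (n:ℝ)]
          rw [← Real.rpow_add hn0]
          norm_num
        rw [hpow, ← Finset.sum_mul, Finset.sum_sub_distrib, ← Finset.mul_sum,
          Finset.sum_const, Finset.card_univ, Fintype.card_fin, nsmul_eq_mul, mul_one]
        apply le_of_eq
        field_simp
end

section
/- Let n ≥ 2 and let P^{n−1} denote the normalized surface area (Haar) measure on the Euclidean unit sphere S_2^{n−1} ⊂ ℝ^n. Then √(2/π) ≤ ∫_{S_2^{n−1}} (‖y‖_1/√n) dP^{n−1}(y) ≤ (n/(n−1))^{1/2} · √(2/π), where ‖y‖_1 = ∑_{i=1}^n |y_i|. -/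
open MeasureTheory Finset

section aux
open Real Set Metric

lemma gamma_midpoint_sq_le {x y : ℝ} (hx : 0 < x) (hy : 0 < y) :
    Gamma ((x + y) / 2) ^ 2 ≤ Gamma x * Gamma y := by
  have h := Real.convexOn_log_Gamma.2 (Set.mem_Ioi.2 hx) (Set.mem_Ioi.2 hy)
    (by norm_num : (0:ℝ) ≤ 1/2) (by norm_num : (0:ℝ) ≤ 1/2) (by norm_num)
  simp only [Function.comp, smul_eq_mul] at h
  have h1 : Real.log (Gamma ((x+y)/2) ^ 2) ≤ Real.log (Gamma x * Gamma y) := by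
    rw [Real.log_pow, Real.log_mul (Real.Gamma_pos_of_pos hx).ne' (Real.Gamma_pos_of_pos hy).ne']
    have hxy : (1/2 : ℝ) * x + (1/2 : ℝ) * y = (x + y)/2 := by ring
    rw [hxy] at h
    push_cast
    linarith
  have h2 := Real.exp_le_exp.2 h1
  have hmid : 0 < (x + y) / 2 := by positivity
  rwa [Real.exp_log (by positivity), Real.exp_log
    (mul_pos (Real.Gamma_pos_of_pos hx) (Real.Gamma_pos_of_pos hy))] at h2

lemma radial_int (n : ℕ) (hn : 1 ≤ n) :
    ∫ x in Ioi (0:ℝ), x ^ (n-1) * (x * exp (-x^2)) = (1/2) * Gamma (((n:ℝ)+1)/2) := by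
  have h := integral_rpow_mul_exp_neg_rpow (p := 2) (q := (n:ℝ)) two_pos
    (lt_of_lt_of_le neg_one_lt_zero (Nat.cast_nonneg n))
  rw [← h]
  refine setIntegral_congr_fun measurableSet_Ioi (fun x hx => ?_)
  have hx0 : (0:ℝ) < x := hx
  have hcast : ((n-1 : ℕ):ℝ) = (n:ℝ) - 1 := by
    push_cast [Nat.cast_sub hn]; ring
  rw [show x ^ (2:ℝ) = x ^ 2 by rw [← Real.rpow_natCast x 2]; norm_num,
    ← Real.rpow_natCast x (n-1), hcast, ← mul_assoc, ← Real.rpow_add_one hx0.ne',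
    sub_add_cancel, Real.rpow_natCast]

lemma abs_exp_int : ∫ t : ℝ, |t| * exp (-t^2) = 1 := by
  have h1 : ∀ t : ℝ, |t| * exp (-t^2) = |t| * exp (-|t|^2) := fun t => by rw [sq_abs]
  simp_rw [h1]
  rw [integral_comp_abs (f := fun s => s * exp (-s^2))]
  have h := radial_int 1 le_rfl
  norm_num at h
  rw [h]; norm_num

lemma integrable_abs_exp : Integrable (fun t : ℝ => |t| * exp (-t^2)) := by
  have h := (integrable_mul_exp_neg_mul_sq (b := 1) one_pos).abs
  refine h.congr (Filter.Eventually.of_forall fun t => ?_)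
  simp [abs_mul, abs_of_pos (exp_pos _), one_mul]

lemma amb_int (n : ℕ) :
    ∫ x : EuclideanSpace ℝ (Fin n), (∑ i, |x i|) * exp (-‖x‖^2)
      = n * Real.sqrt π ^ (n-1) := by
  have e := (EuclideanSpace.volume_preserving_symm_measurableEquiv_toLp (Fin n)).symm
  rw [← e.integral_comp' (fun x : EuclideanSpace ℝ (Fin n) => (∑ i, |x i|) * exp (-‖x‖^2))]
  have key : ∀ x : Fin n → ℝ,
      ((∑ i, |((MeasurableEquiv.toLp 2 (Fin n → ℝ)).symm.symm x) i|) *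
        exp (-‖(MeasurableEquiv.toLp 2 (Fin n → ℝ)).symm.symm x‖^2))
      = ∑ j, ∏ i, ((if i = j then |x i| else 1) * exp (-(x i)^2)) := by
    intro x
    have hnorm : ‖(MeasurableEquiv.toLp 2 (Fin n → ℝ)).symm.symm x‖^2 = ∑ i, (x i)^2 := by
      rw [EuclideanSpace.norm_eq, Real.sq_sqrt (Finset.sum_nonneg fun i _ => sq_nonneg _)]
      simp only [Real.norm_eq_abs, sq_abs]
      rfl
    have hco : ∀ i, ((MeasurableEquiv.toLp 2 (Fin n → ℝ)).symm.symm x) i = x i := fun i => rfl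
    simp only [hco, hnorm]
    rw [← Finset.sum_neg_distrib, Real.exp_sum, Finset.sum_mul]
    refine Finset.sum_congr rfl fun j _ => ?_
    rw [Finset.prod_mul_distrib, Finset.prod_ite_eq' Finset.univ j (fun i => |x i|)]
    simp
  simp_rw [key]
  rw [integral_finset_sum]
  · have hval : ∀ j : Fin n, (∫ x : Fin n → ℝ, ∏ i, ((if i = j then |x i| else 1) * exp (-(x i)^2)))
        = Real.sqrt π ^ (n-1) := by
      intro j
      rw [integral_fintype_prod_volume_eq_prod (f := fun i (t : ℝ) => (if i = j then |t| else 1) * exp (-t^2))]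
      have hv : ∀ i : Fin n, (∫ t : ℝ, (if i = j then |t| else 1) * exp (-t^2))
          = if i = j then 1 else Real.sqrt π := by
        intro i
        by_cases h : i = j
        · simp only [h, if_true]
          exact abs_exp_int
        · simp only [h, if_false, one_mul]
          have := integral_gaussian 1
          simpa using this
      simp_rw [hv]
      rw [← Finset.mul_prod_erase Finset.univ _ (Finset.mem_univ j)]
      rw [if_pos rfl, one_mul]
      rw [Finset.prod_congr rfl (fun i hi => if_neg (Finset.ne_of_mem_erase hi)),
        Finset.prod_const, Finset.card_erase_of_mem (Finset.mem_univ j), Finset.card_univ,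
        Fintype.card_fin]
    simp_rw [hval]
    rw [Finset.sum_const, Finset.card_univ, Fintype.card_fin, nsmul_eq_mul]
  · intro j _
    refine Integrable.fintype_prod (f := fun i (t:ℝ) => (if i = j then |t| else 1) * exp (-t^2)) (fun i => ?_)
    by_cases h : i = j
    · simp only [h, if_pos rfl]; exact integrable_abs_exp
    · simp only [h, if_false, one_mul]
      have := integrable_exp_neg_mul_sq (b := 1) one_pos
      simpa using this

lemma volumeIoiPow_integral (k : ℕ) (g : ℝ → ℝ) :
    ∫ r : Ioi (0:ℝ), g r ∂(Measure.volumeIoiPow k) = ∫ r in Ioi (0:ℝ), r^k * g r := by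
  simp only [Measure.volumeIoiPow, ENNReal.ofReal]
  rw [integral_withDensity_eq_integral_smul ((measurable_subtype_coe.pow_const _).real_toNNReal),
    integral_subtype_comap measurableSet_Ioi (fun a => Real.toNNReal (a^k) • g a)]
  refine setIntegral_congr_fun measurableSet_Ioi fun x hx => ?_
  rw [NNReal.smul_def, Real.coe_toNNReal _ (pow_nonneg hx.out.le _), smul_eq_mul]

lemma polar_decomp (n : ℕ) (hn : 1 ≤ n) :
    ∫ x : EuclideanSpace ℝ (Fin n), (∑ i, |x i|) * exp (-‖x‖^2)
      = (∫ y : sphere (0 : EuclideanSpace ℝ (Fin n)) 1,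
          (∑ i, |(y : EuclideanSpace ℝ (Fin n)) i|) ∂((volume : Measure (EuclideanSpace ℝ (Fin n))).toSphere)) *
        ∫ r in Ioi (0:ℝ), r^(n-1) * (r * exp (-r^2)) := by
  haveI : Nontrivial (EuclideanSpace ℝ (Fin n)) := by
    refine ⟨EuclideanSpace.single ⟨0, hn⟩ 1, 0, ?_⟩
    intro h
    have := congrArg (fun v : EuclideanSpace ℝ (Fin n) => v ⟨0, hn⟩) h
    simp [EuclideanSpace.single_apply] at this
  set E := EuclideanSpace ℝ (Fin n)
  set μ : Measure E := volume
  have hdim : Module.finrank ℝ E = n := finrank_euclideanSpace_fin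
  set G : sphere (0 : E) 1 × Ioi (0:ℝ) → ℝ :=
    fun p => (∑ i, |(p.1 : E) i|) * ((p.2 : ℝ) * exp (-(p.2:ℝ)^2)) with hG
  calc
    ∫ x : E, (∑ i, |x i|) * exp (-‖x‖^2)
        = ∫ x : ({0}ᶜ : Set E), (∑ i, |(x : E) i|) * exp (-‖(x:E)‖^2) ∂(μ.comap (↑)) := by
          rw [integral_subtype_comap (measurableSet_singleton 0).compl
            (fun x : E => (∑ i, |x i|) * exp (-‖x‖^2)), restrict_compl_singleton]
    _ = ∫ p, G p ∂(μ.toSphere.prod (Measure.volumeIoiPow (Module.finrank ℝ E - 1))) := by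
          rw [← μ.measurePreserving_homeomorphUnitSphereProd.integral_comp
            (Homeomorph.measurableEmbedding _) G]
          refine integral_congr_ae (Filter.Eventually.of_forall fun x => ?_)
          have hx : (x : E) ≠ 0 := x.2
          have hnorm : ‖(x:E)‖ ≠ 0 := norm_ne_zero_iff.2 hx
          simp only [hG, homeomorphUnitSphereProd_apply_fst_coe,
            homeomorphUnitSphereProd_apply_snd_coe]
          have habs : ∀ i, |(‖(x:E)‖⁻¹ • (x:E)) i| = ‖(x:E)‖⁻¹ * |(x:E) i| := by
            intro i
            rw [PiLp.smul_apply, smul_eq_mul, abs_mul, abs_of_nonneg (by positivity)]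
          rw [Finset.sum_congr rfl (fun i _ => habs i), ← Finset.mul_sum]
          field_simp
    _ = (∫ y : sphere (0 : E) 1, (∑ i, |(y : E) i|) ∂μ.toSphere) *
          ∫ r : Ioi (0:ℝ), ((r:ℝ) * exp (-(r:ℝ)^2)) ∂(Measure.volumeIoiPow (Module.finrank ℝ E - 1)) := by
          exact integral_prod_mul (fun y : sphere (0:E) 1 => ∑ i, |(y : E) i|)
            (fun r : Ioi (0:ℝ) => (r:ℝ) * exp (-(r:ℝ)^2))
    _ = _ := by
          rw [hdim, volumeIoiPow_integral (n-1) (fun r => r * exp (-r^2))]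

lemma sphere_int_value (n : ℕ) (hn : 1 ≤ n) :
    ∫ y : sphere (0 : EuclideanSpace ℝ (Fin n)) 1,
        (∑ i, |(y : EuclideanSpace ℝ (Fin n)) i|)
        ∂((volume : Measure (EuclideanSpace ℝ (Fin n))).toSphere)
      = 2 * n * Real.sqrt π ^ (n-1) / Gamma (((n:ℝ)+1)/2) := by
  have h1 := polar_decomp n hn
  rw [amb_int n, radial_int n hn] at h1
  have hΓ : 0 < Gamma (((n:ℝ)+1)/2) := Real.Gamma_pos_of_pos (by positivity)
  field_simp at h1 ⊢
  linarith
end aux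

open scoped Real

/-- The normalized surface area (Haar) measure on the Euclidean unit sphere in `ℝⁿ`:
the unique rotation-invariant probability measure on the sphere, obtained by
normalizing the surface measure to have total mass one. -/
noncomputable def sphereHaar (n : ℕ) :
    Measure (Metric.sphere (0 : EuclideanSpace ℝ (Fin n)) 1) :=
  ((volume : Measure (EuclideanSpace ℝ (Fin n))).toSphere Set.univ)⁻¹ •
    (volume : Measure (EuclideanSpace ℝ (Fin n))).toSphere

lemma toSphere_univ_toReal (n : ℕ) (hn : 1 ≤ n) :
    ((volume : Measure (EuclideanSpace ℝ (Fin n))).toSphere Set.univ).toReal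
      = n * (Real.sqrt π ^ n / Real.Gamma ((n:ℝ)/2 + 1)) := by
  haveI : Nonempty (Fin n) := ⟨⟨0, hn⟩⟩
  rw [Measure.toSphere_apply_univ, EuclideanSpace.volume_ball]
  simp only [finrank_euclideanSpace_fin, Fintype.card_fin, ENNReal.ofReal_one, one_pow, one_mul]
  have hΓ : 0 < Real.Gamma ((n:ℝ)/2 + 1) := Real.Gamma_pos_of_pos (by positivity)
  rw [ENNReal.toReal_mul, ENNReal.toReal_natCast, ENNReal.toReal_ofReal (by positivity)]

lemma sphereHaar_int_value (n : ℕ) (hn : 1 ≤ n) :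
    ∫ y : Metric.sphere (0 : EuclideanSpace ℝ (Fin n)) 1,
        (∑ i, |(y : EuclideanSpace ℝ (Fin n)) i|) ∂(sphereHaar n)
      = n * Real.Gamma ((n:ℝ)/2) / (Real.sqrt π * Real.Gamma (((n:ℝ)+1)/2)) := by
  have hΓodd : 0 < Real.Gamma (((n:ℝ)+1)/2) := Real.Gamma_pos_of_pos (by positivity)
  have hΓhalf : 0 < Real.Gamma ((n:ℝ)/2) := Real.Gamma_pos_of_pos (by positivity)
  have hn0 : 0 < (n:ℝ) := by exact_mod_cast hn
  have hπ : 0 < Real.sqrt π := Real.sqrt_pos.2 Real.pi_pos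
  rw [show sphereHaar n = ((volume : Measure (EuclideanSpace ℝ (Fin n))).toSphere Set.univ)⁻¹ •
      (volume : Measure (EuclideanSpace ℝ (Fin n))).toSphere from rfl,
    integral_smul_measure, sphere_int_value n hn, ENNReal.toReal_inv, toSphere_univ_toReal n hn,
    smul_eq_mul]
  have hΓ1 : Real.Gamma ((n:ℝ)/2 + 1) = ((n:ℝ)/2) * Real.Gamma ((n:ℝ)/2) :=
    Real.Gamma_add_one (by positivity)
  have hpow : Real.sqrt π ^ n = Real.sqrt π ^ (n-1) * Real.sqrt π := by
    rw [← pow_succ, Nat.sub_add_cancel hn]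
  rw [hΓ1, hpow]
  have hs : (0:ℝ) < Real.sqrt π ^ (n-1) := by positivity
  field_simp

theorem expectation_l1_norm_bounds (n : ℕ) (hn : 2 ≤ n) :
    Real.sqrt (2 / Real.pi)
        ≤ ∫ y : Metric.sphere (0 : EuclideanSpace ℝ (Fin n)) 1,
            ((∑ i, |(y : EuclideanSpace ℝ (Fin n)) i|) / Real.sqrt n) ∂(sphereHaar n) ∧
      ∫ y : Metric.sphere (0 : EuclideanSpace ℝ (Fin n)) 1,
            ((∑ i, |(y : EuclideanSpace ℝ (Fin n)) i|) / Real.sqrt n) ∂(sphereHaar n)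
        ≤ ((n : ℝ) / ((n : ℝ) - 1)) ^ ((1 : ℝ)/2) * Real.sqrt (2 / Real.pi) := by
  have hn1 : 1 ≤ n := le_trans one_le_two hn
  have hn0 : (0:ℝ) < n := by exact_mod_cast hn1
  have hn1' : (1:ℝ) ≤ n := by exact_mod_cast hn1
  have hn2 : (2:ℝ) ≤ n := by exact_mod_cast hn
  set a := Real.Gamma ((n:ℝ)/2) with ha
  set b := Real.Gamma (((n:ℝ)+1)/2) with hb
  have hapos : 0 < a := Real.Gamma_pos_of_pos (by positivity)
  have hbpos : 0 < b := Real.Gamma_pos_of_pos (by positivity)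
  have hπ : 0 < Real.sqrt π := Real.sqrt_pos.2 Real.pi_pos
  have hsn : 0 < Real.sqrt n := Real.sqrt_pos.2 hn0
  have hI : (∫ y : Metric.sphere (0 : EuclideanSpace ℝ (Fin n)) 1,
      ((∑ i, |(y : EuclideanSpace ℝ (Fin n)) i|) / Real.sqrt n) ∂(sphereHaar n))
      = Real.sqrt n * a / (Real.sqrt π * b) := by
    rw [integral_div, sphereHaar_int_value n hn1, ← ha, ← hb]
    field_simp
    have hss : Real.sqrt (n:ℝ) * Real.sqrt (n:ℝ) = (n:ℝ) := Real.mul_self_sqrt hn0.le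
    linear_combination (-1 : ℝ) * hss
  rw [hI]
  -- key gamma inequalities
  have hmid1 : b^2 ≤ ((n:ℝ)/2) * a^2 := by
    have h := gamma_midpoint_sq_le (x := (n:ℝ)/2) (y := (n:ℝ)/2 + 1) (by positivity) (by positivity)
    rw [show ((n:ℝ)/2 + ((n:ℝ)/2 + 1))/2 = ((n:ℝ)+1)/2 by ring] at h
    rw [Real.Gamma_add_one (by positivity : ((n:ℝ)/2) ≠ 0)] at h
    calc b^2 ≤ a * (((n:ℝ)/2) * a) := h
    _ = ((n:ℝ)/2) * a^2 := by ring
  have hmid2 : ((n:ℝ)-1) * a^2 ≤ 2 * b^2 := by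
    set c := Real.Gamma (((n:ℝ)-1)/2) with hc
    have hn1pos : (0:ℝ) < ((n:ℝ)-1)/2 := by linarith
    have h := gamma_midpoint_sq_le (x := ((n:ℝ)-1)/2) (y := ((n:ℝ)+1)/2) hn1pos (by positivity)
    rw [show (((n:ℝ)-1)/2 + ((n:ℝ)+1)/2)/2 = (n:ℝ)/2 by ring] at h
    have hbc : b = (((n:ℝ)-1)/2) * c := by
      rw [hb, hc, show ((n:ℝ)+1)/2 = ((n:ℝ)-1)/2 + 1 by ring, Real.Gamma_add_one hn1pos.ne']
    have hcpos : 0 < c := Real.Gamma_pos_of_pos hn1pos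
    -- a^2 ≤ c * b and b = ((n-1)/2) c so c = 2b/(n-1)
    have : a^2 ≤ c * b := h
    nlinarith [hbpos, hcpos]
  have h2π : Real.sqrt (2/π) = Real.sqrt 2 / Real.sqrt π := Real.sqrt_div (by norm_num) π
  have sqrt_mono : ∀ {x y : ℝ}, 0 ≤ x → 0 ≤ y → x^2 ≤ y^2 → x ≤ y := by
    intro x y hx hy h
    have h2 := Real.sqrt_le_sqrt h
    rwa [Real.sqrt_sq hx, Real.sqrt_sq hy] at h2
  constructor
  · -- lower bound
    have key : Real.sqrt 2 * b ≤ Real.sqrt n * a := by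
      refine sqrt_mono (by positivity) (by positivity) ?_
      rw [mul_pow, mul_pow, Real.sq_sqrt (by norm_num : (0:ℝ) ≤ 2), Real.sq_sqrt hn0.le]
      nlinarith [hmid1]
    rw [h2π, div_le_div_iff₀ hπ (by positivity)]
    nlinarith [mul_le_mul_of_nonneg_right key hπ.le]
  · -- upper bound
    have hn1pos : (0:ℝ) < (n:ℝ) - 1 := by linarith
    have hfrac : (0:ℝ) ≤ (n:ℝ)/((n:ℝ)-1) := by positivity
    rw [show ((n:ℝ)/((n:ℝ)-1)) ^ ((1:ℝ)/2) = Real.sqrt ((n:ℝ)/((n:ℝ)-1)) from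
      (Real.sqrt_eq_rpow _).symm, h2π]
    have key2 : Real.sqrt n * a ≤ Real.sqrt ((n:ℝ)/((n:ℝ)-1)) * (Real.sqrt 2 * b) := by
      refine sqrt_mono (by positivity) (by positivity) ?_
      rw [mul_pow, mul_pow, mul_pow, Real.sq_sqrt (by norm_num : (0:ℝ) ≤ 2),
        Real.sq_sqrt hn0.le, Real.sq_sqrt hfrac]
      have h4 : ((n:ℝ)/((n:ℝ)-1)) * ((n-1) * a^2) ≤ ((n:ℝ)/((n:ℝ)-1)) * (2*b^2) :=
        mul_le_mul_of_nonneg_left hmid2 hfrac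
      have h5 : ((n:ℝ)/((n:ℝ)-1)) * ((n-1) * a^2) = (n:ℝ) * a^2 := by
        field_simp
      nlinarith [h4, h5]
    rw [mul_div_assoc', div_le_div_iff₀ (by positivity) hπ]
    nlinarith [mul_le_mul_of_nonneg_right key2 hπ.le]
end
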